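/- Let w ∈ ℤ_{≥1}^n and let J be a nonempty finite set of positive integers with D = max J; for each i ∈ J let r_i ≥ 1 and let f_{ij} ∈ ℂ[x_1,…,x_n] (1 ≤ j ≤ r_i) be nonconstant with deg_w(f_{ij}) = i, and assume the w-weighted homogeneous parts F_{ijw} of the f_{ij} of top w-degree i are linearly independent over ℂ. Consider variables x_{uℓ} (1 ≤ u ≤ n, ℓ ≥ 0) with the weight w̃(x_{uℓ}) = w_u + D·ℓ. Let a_{ij}(t) ∈ ℂ[[t]] (i ∈ J, 1 ≤ j ≤ r_i) be formal power series with (a_{ij}(0))_{i,j} ≠ 0, and for m ≥ 0 let G_m ∈ ℂ[x_{uℓ} : 1 ≤ u ≤ n, 0 ≤ ℓ ≤ m] be the coefficient of t^m in Σ_{i,j} a_{ij}(t)·f_{ij}(x_1(t),…,x_n(t)), where x_u(t) = Σ_{ℓ=0}^{m} x_{uℓ} t^ℓ. Let g_{a_0} = Σ_{i,j} a_{ij}(0)·f_{ij}, let ℓ_0 = deg_w(g_{a_0}), let g̃ be the w-weighted homogeneous part of g_{a_0} of w-degree ℓ_0, and let H_m be the coefficient of t^m in g̃(x_1(t),…,x_n(t)).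 Then deg_{w̃}(G_m) = mD + ℓ_0, and the w̃-weighted homogeneous component of G_m of w̃-degree mD + ℓ_0 equals H_m; that is, the w̃-weighted homogeneous part of highest w̃-degree of G_m is H_m. -/

import Mathlib

open MvPolynomial

section general
variable {σ : Type*}


/-- decomposition into components up to degree N -/
lemma sum_range_whc (w : σ → ℕ) (p : MvPolynomial σ ℂ) (N : ℕ)
    (h : weightedTotalDegree w p ≤ N) :
    ∑ d ∈ Finset.range (N + 1), weightedHomogeneousComponent w d p = p := by
  classical
  ext α
  rw [MvPolynomial.coeff_sum]
  simp only [coeff_weightedHomogeneousComponent]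
  rw [Finset.sum_ite_eq (Finset.range (N+1)) ((Finsupp.weight w) α) (fun _ => coeff α p)]
  by_cases hα : α ∈ p.support
  · rw [if_pos]
    rw [Finset.mem_range]
    exact lt_of_le_of_lt (le_trans (le_weightedTotalDegree w hα) h) (Nat.lt_succ_self N)
  · rw [notMem_support_iff] at hα
    simp [hα]

lemma weightedTotalDegree_le_iff (w : σ → ℕ) (p : MvPolynomial σ ℂ) (e : ℕ) :
    weightedTotalDegree w p ≤ e ↔ ∀ α ∈ p.support, Finsupp.weight w α ≤ e :=
  Finset.sup_le_iff

lemma whc_ne_zero_le (w : σ → ℕ) (p : MvPolynomial σ ℂ) (d : ℕ)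
    (h : weightedHomogeneousComponent w d p ≠ 0) :
    d ≤ weightedTotalDegree w p := by
  by_contra hc
  exact h (weightedHomogeneousComponent_eq_zero d p (lt_of_not_ge hc))

lemma exists_eval_ne_zero (p : MvPolynomial σ ℂ) (hp : p ≠ 0) :
    ∃ v : σ → ℂ, eval v p ≠ 0 := by
  by_contra hc
  push_neg at hc
  exact hp (MvPolynomial.funext fun x => by rw [hc x, map_zero])
end general


section jet
variable (n m : ℕ) (w : Fin n → ℕ) (D : ℕ)

local notation "R'" => MvPolynomial (Fin n × Fin (m+1)) ℂ

/-- the jet substitution -/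
noncomputable def jet : Fin n → PowerSeries R' := fun u : Fin n =>
  ∑ ℓ : Fin (m + 1),
    PowerSeries.C (R := R') (MvPolynomial.X (u, ℓ)) * PowerSeries.X ^ (ℓ : ℕ)

/-- weights on jet variables -/
def wt : Fin n × Fin (m+1) → ℕ := fun q => w q.1 + D * (q.2 : ℕ)

def GoodPS (d : ℕ) (F : PowerSeries R') : Prop :=
  ∀ k, PowerSeries.coeff (R := R') k F ∈ weightedHomogeneousSubmodule ℂ (wt n m w D) (d + D * k)

variable {n m w D}

lemma GoodPS.one : GoodPS n m w D 0 1 := by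
  intro k
  rw [PowerSeries.coeff_one]
  split_ifs with h
  · subst h
    simpa using isWeightedHomogeneous_one ℂ (wt n m w D)
  · exact Submodule.zero_mem _

lemma GoodPS.algebraMap (c : ℂ) :
    GoodPS n m w D 0 (algebraMap ℂ (PowerSeries R') c) := by
  intro k
  rw [PowerSeries.algebraMap_apply, PowerSeries.coeff_C]
  split_ifs with h
  · subst h
    simpa [MvPolynomial.algebraMap_eq] using isWeightedHomogeneous_C (wt n m w D) c
  · exact Submodule.zero_mem _

lemma GoodPS.mul {d e : ℕ} {F G : PowerSeries R'} (hF : GoodPS n m w D d F)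
    (hG : GoodPS n m w D e G) : GoodPS n m w D (d + e) (F * G) := by
  intro k
  rw [PowerSeries.coeff_mul]
  apply Submodule.sum_mem
  intro x hx
  have hxk : x.1 + x.2 = k := Finset.HasAntidiagonal.mem_antidiagonal.mp hx
  have hdeg : d + D * x.1 + (e + D * x.2) = d + e + D * k := by rw [← hxk]; ring
  rw [← hdeg]
  exact weightedHomogeneousSubmodule_mul (wt n m w D) _ _
    (Submodule.mul_mem_mul (hF x.1) (hG x.2))

lemma GoodPS.pow {d : ℕ} {F : PowerSeries R'} (hF : GoodPS n m w D d F) (e : ℕ) :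
    GoodPS n m w D (e * d) (F ^ e) := by
  induction e with
  | zero => simpa using GoodPS.one
  | succ e ih =>
      have := ih.mul hF
      have he : e * d + d = (e + 1) * d := by ring
      rw [pow_succ]
      exact he ▸ this

lemma GoodPS.prod {ι : Type*} (s : Finset ι) (F : ι → PowerSeries R') (dg : ι → ℕ)
    (h : ∀ i ∈ s, GoodPS n m w D (dg i) (F i)) :
    GoodPS n m w D (∑ i ∈ s, dg i) (∏ i ∈ s, F i) := by
  classical
  induction s using Finset.induction_on with
  | empty => simpa using GoodPS.one
  | insert x s hx ih =>
      rw [Finset.sum_insert hx, Finset.prod_insert hx]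
      exact (h x (Finset.mem_insert_self x s)).mul
        (ih fun i hi => h i (Finset.mem_insert_of_mem hi))

lemma GoodPS.sum {ι : Type*} (s : Finset ι) (F : ι → PowerSeries R') (d : ℕ)
    (h : ∀ i ∈ s, GoodPS n m w D d (F i)) :
    GoodPS n m w D d (∑ i ∈ s, F i) := by
  intro k
  rw [map_sum]
  exact Submodule.sum_mem _ fun i hi => h i hi k

lemma goodPS_jet (u : Fin n) : GoodPS n m w D (w u) (jet n m u) := by
  intro k
  rw [jet, map_sum]
  by_cases hk : k ≤ m
  · have hk' : k < m + 1 := Nat.lt_succ_of_le hk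
    rw [Finset.sum_eq_single_of_mem (⟨k, hk'⟩ : Fin (m+1)) (Finset.mem_univ _)]
    · rw [PowerSeries.coeff_C_mul_X_pow, if_pos rfl]
      have := isWeightedHomogeneous_X ℂ (wt n m w D) (u, (⟨k, hk'⟩ : Fin (m+1)))
      simpa [wt] using this
    · intro b _ hb
      rw [PowerSeries.coeff_C_mul_X_pow, if_neg]
      intro hc
      exact hb (Fin.ext hc.symm)
  · rw [Finset.sum_eq_zero]
    · exact Submodule.zero_mem _
    · intro b _
      rw [PowerSeries.coeff_C_mul_X_pow, if_neg]
      intro hc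
      exact hk (hc ▸ Nat.lt_succ_iff.mp b.isLt)

lemma goodPS_of_homog {p : MvPolynomial (Fin n) ℂ} {d : ℕ}
    (hp : p.IsWeightedHomogeneous w d) :
    GoodPS n m w D d (aeval (jet n m) p) := by
  classical
  rw [p.as_sum, map_sum]
  apply GoodPS.sum
  intro β hβ
  rw [aeval_monomial]
  have h1 : GoodPS n m w D 0 (algebraMap ℂ (PowerSeries R') (coeff β p)) :=
    GoodPS.algebraMap _
  have h2 : GoodPS n m w D (∑ u ∈ β.support, β u * w u)
      (β.prod fun u e => jet n m u ^ e) := by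
    rw [Finsupp.prod]
    exact GoodPS.prod _ _ _ fun u _ => (goodPS_jet u).pow (β u)
  have h3 := h1.mul h2
  have hwβ : (Finsupp.weight w) β = ∑ u ∈ β.support, β u * w u := by
    rw [Finsupp.weight_apply, Finsupp.sum]
    simp [mul_comm]
  have hd : d = ∑ u ∈ β.support, β u * w u := by
    rw [← hwβ]; exact (hp (mem_support_iff.mp hβ)).symm
  rw [hd]
  simpa using h3

lemma coeff_aeval_homog {p : MvPolynomial (Fin n) ℂ} {d : ℕ}
    (hp : p.IsWeightedHomogeneous w d) (k : ℕ) :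
    (PowerSeries.coeff (R := R') k (aeval (jet n m) p)).IsWeightedHomogeneous (wt n m w D) (d + D * k) :=
  goodPS_of_homog hp k

lemma coeff_aeval_decomp (p : MvPolynomial (Fin n) ℂ) (k : ℕ) :
    PowerSeries.coeff (R := R') k (aeval (jet n m) p) =
      ∑ d ∈ Finset.range (weightedTotalDegree w p + 1),
        PowerSeries.coeff (R := R') k (aeval (jet n m) (weightedHomogeneousComponent w d p)) := by
  conv_lhs => rw [← sum_range_whc w p _ le_rfl]
  rw [map_sum, map_sum]

lemma support_coeff_aeval (p : MvPolynomial (Fin n) ℂ) (k : ℕ) {α : Fin n × Fin (m+1) →₀ ℕ}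
    (hα : α ∈ (PowerSeries.coeff (R := R') k (aeval (jet n m) p)).support) :
    ∃ d ≤ weightedTotalDegree w p, Finsupp.weight (wt n m w D) α = d + D * k := by
  classical
  rw [coeff_aeval_decomp p k] at hα
  obtain ⟨d, hd, hαd⟩ := Finset.mem_biUnion.mp (MvPolynomial.support_sum hα)
  refine ⟨d, Nat.lt_succ_iff.mp (Finset.mem_range.mp hd), ?_⟩
  exact goodPS_of_homog (weightedHomogeneousComponent_isWeightedHomogeneous d p) k
    (mem_support_iff.mp hαd)

lemma whc_coeff_aeval_lt (p : MvPolynomial (Fin n) ℂ) (i k e : ℕ)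
    (hdeg : weightedTotalDegree w p ≤ i) (h : i + D * k < e) :
    weightedHomogeneousComponent (wt n m w D) e
      (PowerSeries.coeff (R := R') k (aeval (jet n m) p)) = 0 := by
  classical
  rw [coeff_aeval_decomp p k, map_sum]
  apply Finset.sum_eq_zero
  intro d hd
  have hd' : d ≤ i := le_trans (Nat.lt_succ_iff.mp (Finset.mem_range.mp hd)) hdeg
  refine MvPolynomial.IsWeightedHomogeneous.weightedHomogeneousComponent_ne e
    (goodPS_of_homog (weightedHomogeneousComponent_isWeightedHomogeneous d p) k) ?_
  have : d + D * k ≤ i + D * k := by omega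
  omega

lemma whc_coeff_aeval_top (p : MvPolynomial (Fin n) ℂ) (k ℓ₀ : ℕ) :
    weightedHomogeneousComponent (wt n m w D) (ℓ₀ + D * k)
      (PowerSeries.coeff (R := R') k (aeval (jet n m) p)) =
      PowerSeries.coeff (R := R') k (aeval (jet n m) (weightedHomogeneousComponent w ℓ₀ p)) := by
  classical
  rw [coeff_aeval_decomp p k, map_sum]
  have key : ∀ d, weightedHomogeneousComponent (wt n m w D) (ℓ₀ + D * k)
      (PowerSeries.coeff (R := R') k (aeval (jet n m) (weightedHomogeneousComponent w d p))) =
      if ℓ₀ = d then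
        PowerSeries.coeff (R := R') k (aeval (jet n m) (weightedHomogeneousComponent w ℓ₀ p))
      else 0 := by
    intro d
    rw [weightedHomogeneousComponent_of_mem
      (goodPS_of_homog (weightedHomogeneousComponent_isWeightedHomogeneous d p) k)]
    by_cases hd : ℓ₀ = d
    · subst hd; simp
    · rw [if_neg (by omega), if_neg hd]
  rw [Finset.sum_congr rfl fun d _ => key d, Finset.sum_ite_eq]
  split_ifs with h
  · rfl
  · rw [Finset.mem_range, Nat.lt_succ_iff, not_le] at h
    symm
    rw [weightedHomogeneousComponent_eq_zero ℓ₀ p h, map_zero, map_zero]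


variable {n : ℕ} {w : Fin n → ℕ}

/-- PowerSeries.map as an AlgHom -/
noncomputable def psMapAlg {A B : Type*} [CommSemiring A] [CommSemiring B]
    [Algebra ℂ A] [Algebra ℂ B] (e : A →ₐ[ℂ] B) : PowerSeries A →ₐ[ℂ] PowerSeries B :=
  { PowerSeries.map e.toRingHom with
    commutes' := fun r => by
      simp [PowerSeries.algebraMap_apply, PowerSeries.map_C] }

@[simp] lemma psMapAlg_apply {A B : Type*} [CommSemiring A] [CommSemiring B]
    [Algebra ℂ A] [Algebra ℂ B] (e : A →ₐ[ℂ] B) (F : PowerSeries A) :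
    psMapAlg e F = PowerSeries.map e.toRingHom F := rfl

lemma dvd_aeval_sub (N : ℕ) (x y : Fin n → PowerSeries ℂ)
    (h : ∀ u, (PowerSeries.X : PowerSeries ℂ) ^ N ∣ x u - y u)
    (p : MvPolynomial (Fin n) ℂ) :
    (PowerSeries.X : PowerSeries ℂ) ^ N ∣ aeval x p - aeval y p := by
  induction p using MvPolynomial.induction_on with
  | C c => simp
  | add p q hp hq =>
      rw [map_add, map_add]
      have hkey : aeval x p + aeval x q - (aeval y p + aeval y q) =
          (aeval x p - aeval y p) + (aeval x q - aeval y q) := by ring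
      rw [hkey]
      exact dvd_add hp hq
  | mul_X p u hp =>
      rw [map_mul, map_mul, aeval_X, aeval_X]
      have hkey : aeval x p * x u - aeval y p * y u =
          aeval x p * (x u - y u) + (aeval x p - aeval y p) * y u := by ring
      rw [hkey]
      exact dvd_add ((h u).mul_left _) (hp.mul_right _)

lemma coeff_one_add_X_pow (N k : ℕ) :
    PowerSeries.coeff (R := ℂ) k ((1 + PowerSeries.X) ^ N) = (N.choose k : ℂ) := by
  rw [add_comm (1 : PowerSeries ℂ) PowerSeries.X, add_pow, map_sum]
  have key : ∀ j ∈ Finset.range (N + 1),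
      PowerSeries.coeff (R := ℂ) k (PowerSeries.X ^ j * 1 ^ (N - j) * (N.choose j : PowerSeries ℂ)) =
        if k = j then (N.choose j : ℂ) else 0 := by
    intro j _
    rw [one_pow, mul_one, mul_comm, ← map_natCast (PowerSeries.C (R := ℂ)) (N.choose j),
      PowerSeries.coeff_C_mul_X_pow]
  rw [Finset.sum_congr rfl key, Finset.sum_ite_eq (Finset.range (N+1)) k
    (fun j => (N.choose j : ℂ))]
  split_ifs with h
  · rfl
  · rw [Finset.mem_range, Nat.lt_succ_iff, not_le] at h
    rw [Nat.choose_eq_zero_of_lt h, Nat.cast_zero]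

lemma aeval_scale {p : MvPolynomial (Fin n) ℂ} {d : ℕ}
    (hp : p.IsWeightedHomogeneous w d) (v : Fin n → ℂ) (N : ℕ) :
    aeval (fun u => PowerSeries.C (R := ℂ) (v u) * (1 + PowerSeries.X) ^ (N * w u)) p =
      (1 + PowerSeries.X) ^ (N * d) * PowerSeries.C (R := ℂ) (eval v p) := by
  classical
  conv_lhs => rw [p.as_sum]
  conv_rhs => rw [p.as_sum]
  rw [map_sum, map_sum, map_sum, Finset.mul_sum]
  apply Finset.sum_congr rfl
  intro β hβ
  rw [aeval_monomial, eval_monomial]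
  have hwβ : ∑ u ∈ β.support, N * w u * β u = N * d := by
    have h1 : (Finsupp.weight w) β = d := hp (mem_support_iff.mp hβ)
    rw [Finsupp.weight_apply, Finsupp.sum] at h1
    rw [← h1, Finset.mul_sum]
    apply Finset.sum_congr rfl
    intro u _
    simp [smul_eq_mul]
    ring
  rw [Finsupp.prod, Finsupp.prod]
  have hprod : ∏ u ∈ β.support, (PowerSeries.C (R := ℂ) (v u) *
      (1 + PowerSeries.X) ^ (N * w u)) ^ β u =
      PowerSeries.C (R := ℂ) (∏ u ∈ β.support, v u ^ β u) * (1 + PowerSeries.X) ^ (N * d) := by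
    rw [map_prod]
    rw [← hwβ, ← Finset.prod_pow_eq_pow_sum]
    rw [← Finset.prod_mul_distrib]
    apply Finset.prod_congr rfl
    intro u _
    rw [mul_pow, map_pow, ← pow_mul]
  rw [hprod]
  simp only [PowerSeries.algebraMap_apply, Algebra.algebraMap_self, RingHom.id_apply, map_mul]
  ring


lemma coeff_sum_C_mul_X_pow {m : ℕ} (c : Fin (m+1) → ℂ) (k : ℕ) (hk : k < m + 1) :
    PowerSeries.coeff (R := ℂ) k
      (∑ ℓ : Fin (m+1), PowerSeries.C (R := ℂ) (c ℓ) * PowerSeries.X ^ (ℓ : ℕ)) = c ⟨k, hk⟩ := by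
  rw [map_sum, Finset.sum_eq_single_of_mem (⟨k, hk⟩ : Fin (m+1)) (Finset.mem_univ _)]
  · rw [PowerSeries.coeff_C_mul_X_pow, if_pos rfl]
  · intro b _ hb
    rw [PowerSeries.coeff_C_mul_X_pow, if_neg fun hc => hb (Fin.ext hc.symm)]

lemma aeval_jet_coeff_ne_zero {n m : ℕ} {w : Fin n → ℕ} {p : MvPolynomial (Fin n) ℂ} {d : ℕ}
    (hd : 1 ≤ d) (hp : p.IsWeightedHomogeneous w d) (hp0 : p ≠ 0) :
    PowerSeries.coeff (R := (MvPolynomial (Fin n × Fin (m+1)) ℂ)) m (aeval (jet n m) p) ≠ 0 := by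
  obtain ⟨v, hv⟩ := exists_eval_ne_zero p hp0
  set c : Fin n × Fin (m+1) → ℂ := fun q => v q.1 * ((m * w q.1).choose (q.2 : ℕ) : ℂ) with hc
  set e : MvPolynomial (Fin n × Fin (m+1)) ℂ →ₐ[ℂ] ℂ := aeval c with he
  suffices hne : e (PowerSeries.coeff (R := (MvPolynomial (Fin n × Fin (m+1)) ℂ)) m
      (aeval (jet n m) p)) ≠ 0 by
    intro h0
    rw [h0, map_zero] at hne
    exact hne rfl
  have h1 : e (PowerSeries.coeff (R := (MvPolynomial (Fin n × Fin (m+1)) ℂ)) m (aeval (jet n m) p)) =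
      PowerSeries.coeff (R := ℂ) m (psMapAlg e (aeval (jet n m) p)) := by
    rw [psMapAlg_apply, PowerSeries.coeff_map]
    rfl
  have h2 : psMapAlg e (aeval (jet n m) p) =
      aeval (fun u => psMapAlg e (jet n m u)) p := comp_aeval_apply _ _ p
  have h3 : ∀ u, psMapAlg e (jet n m u) =
      ∑ ℓ : Fin (m+1), PowerSeries.C (R := ℂ) (c (u, ℓ)) * PowerSeries.X ^ (ℓ : ℕ) := by
    intro u
    rw [psMapAlg_apply, jet, map_sum]
    refine Finset.sum_congr rfl fun ℓ _ => ?_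
    rw [map_mul, PowerSeries.map_C, map_pow, PowerSeries.map_X]
    congr 1
    simp [he]
  have h4 : ∀ u, (PowerSeries.X : PowerSeries ℂ) ^ (m + 1) ∣
      (∑ ℓ : Fin (m+1), PowerSeries.C (R := ℂ) (c (u, ℓ)) * PowerSeries.X ^ (ℓ : ℕ)) -
        PowerSeries.C (R := ℂ) (v u) * (1 + PowerSeries.X) ^ (m * w u) := by
    intro u
    rw [PowerSeries.X_pow_dvd_iff]
    intro k hk
    rw [map_sub, coeff_sum_C_mul_X_pow (fun ℓ => c (u, ℓ)) k hk,
      PowerSeries.coeff_C_mul, coeff_one_add_X_pow]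
    simp only [hc]
    rw [sub_eq_zero]
  have h5 := dvd_aeval_sub (m + 1)
    (fun u => ∑ ℓ : Fin (m+1), PowerSeries.C (R := ℂ) (c (u, ℓ)) * PowerSeries.X ^ (ℓ : ℕ))
    (fun u => PowerSeries.C (R := ℂ) (v u) * (1 + PowerSeries.X) ^ (m * w u)) h4 p
  have h6 := (PowerSeries.X_pow_dvd_iff.mp h5) m (Nat.lt_succ_self m)
  rw [map_sub, sub_eq_zero] at h6
  rw [h1, h2]
  have h7 : (fun u => psMapAlg e (jet n m u)) =
      fun u => ∑ ℓ : Fin (m+1), PowerSeries.C (R := ℂ) (c (u, ℓ)) * PowerSeries.X ^ (ℓ : ℕ) :=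
    funext h3
  rw [h7, h6, aeval_scale hp v m, mul_comm, PowerSeries.coeff_C_mul, coeff_one_add_X_pow]
  have hmd : m ≤ m * d := by
    calc m = m * 1 := (mul_one m).symm
    _ ≤ m * d := Nat.mul_le_mul_left m hd
  exact mul_ne_zero hv (Nat.cast_ne_zero.mpr (Nat.choose_pos hmd).ne')

end jet


/-- Lemma `highpart`. The top `w̃`-weighted homogeneous part of the jet
polynomial `G_m` is the jet polynomial `H_m` of the top `w`-weighted part of `g_{a₀}`, and
`deg_{w̃} G_m = mD + ℓ₀`. -/
theorem stmt18 (n : ℕ) (hn : 1 ≤ n) (w : Fin n → ℕ) (hw : ∀ u, 1 ≤ w u)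
    (J : Finset ℕ) (hJ : J.Nonempty) (hJ1 : ∀ i ∈ J, 1 ≤ i)
    (r : ℕ → ℕ) (hr : ∀ i ∈ J, 1 ≤ r i)
    (f : (i : ℕ) → Fin (r i) → MvPolynomial (Fin n) ℂ)
    (hfc : ∀ i ∈ J, ∀ j, (f i j).totalDegree ≠ 0)
    (hfd : ∀ i ∈ J, ∀ j, MvPolynomial.weightedTotalDegree w (f i j) = i)
    (hlin : LinearIndependent ℂ fun q : Σ i : ↥J, Fin (r i.1) =>
      MvPolynomial.weightedHomogeneousComponent w q.1.1 (f q.1.1 q.2))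
    (a : (i : ↥J) → Fin (r i.1) → PowerSeries ℂ)
    (ha : (fun (i : ↥J) (j : Fin (r i.1)) => PowerSeries.coeff (R := ℂ) 0 (a i j)) ≠ 0)
    (m : ℕ) :
    MvPolynomial.weightedTotalDegree
        (fun q : Fin n × Fin (m + 1) => w q.1 + J.max' hJ * (q.2 : ℕ))
        (PowerSeries.coeff (R := (MvPolynomial (Fin n × Fin (m + 1)) ℂ)) m
          (∑ i : ↥J, ∑ j : Fin (r i.1),
            PowerSeries.map (algebraMap ℂ (MvPolynomial (Fin n × Fin (m + 1)) ℂ)) (a i j) *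
              MvPolynomial.aeval (fun u : Fin n =>
                ∑ ℓ : Fin (m + 1),
                  PowerSeries.C (R := (MvPolynomial (Fin n × Fin (m + 1)) ℂ))
                      (MvPolynomial.X (u, ℓ)) * PowerSeries.X ^ (ℓ : ℕ))
                (f i.1 j))) =
      m * J.max' hJ + MvPolynomial.weightedTotalDegree w
        (∑ i : ↥J, ∑ j : Fin (r i.1),
          MvPolynomial.C (PowerSeries.coeff (R := ℂ) 0 (a i j)) * f i.1 j) ∧
    MvPolynomial.weightedHomogeneousComponent
        (fun q : Fin n × Fin (m + 1) => w q.1 + J.max' hJ * (q.2 : ℕ))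
        (m * J.max' hJ + MvPolynomial.weightedTotalDegree w
          (∑ i : ↥J, ∑ j : Fin (r i.1),
            MvPolynomial.C (PowerSeries.coeff (R := ℂ) 0 (a i j)) * f i.1 j))
        (PowerSeries.coeff (R := (MvPolynomial (Fin n × Fin (m + 1)) ℂ)) m
          (∑ i : ↥J, ∑ j : Fin (r i.1),
            PowerSeries.map (algebraMap ℂ (MvPolynomial (Fin n × Fin (m + 1)) ℂ)) (a i j) *
              MvPolynomial.aeval (fun u : Fin n =>
                ∑ ℓ : Fin (m + 1),
                  PowerSeries.C (R := (MvPolynomial (Fin n × Fin (m + 1)) ℂ))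
                      (MvPolynomial.X (u, ℓ)) * PowerSeries.X ^ (ℓ : ℕ))
                (f i.1 j))) =
      PowerSeries.coeff (R := (MvPolynomial (Fin n × Fin (m + 1)) ℂ)) m
        (MvPolynomial.aeval (fun u : Fin n =>
            ∑ ℓ : Fin (m + 1),
              PowerSeries.C (R := (MvPolynomial (Fin n × Fin (m + 1)) ℂ))
                  (MvPolynomial.X (u, ℓ)) * PowerSeries.X ^ (ℓ : ℕ))
          (MvPolynomial.weightedHomogeneousComponent w
            (MvPolynomial.weightedTotalDegree w
              (∑ i : ↥J, ∑ j : Fin (r i.1),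
                MvPolynomial.C (PowerSeries.coeff (R := ℂ) 0 (a i j)) * f i.1 j))
            (∑ i : ↥J, ∑ j : Fin (r i.1),
              MvPolynomial.C (PowerSeries.coeff (R := ℂ) 0 (a i j)) * f i.1 j))) := by
  classical
  set D := J.max' hJ with hD
  have hwt : (fun q : Fin n × Fin (m + 1) => w q.1 + D * (q.2 : ℕ)) = wt n m w D := rfl
  have hjet : (fun u : Fin n =>
      ∑ ℓ : Fin (m + 1),
        PowerSeries.C (R := (MvPolynomial (Fin n × Fin (m + 1)) ℂ))
            (MvPolynomial.X (u, ℓ)) * PowerSeries.X ^ (ℓ : ℕ)) = jet n m := rfl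
  rw [hwt, hjet]
  set g : MvPolynomial (Fin n) ℂ :=
    ∑ i : ↥J, ∑ j : Fin (r i.1),
      MvPolynomial.C (PowerSeries.coeff (R := ℂ) 0 (a i j)) * f i.1 j with hg
  set G : MvPolynomial (Fin n × Fin (m + 1)) ℂ :=
    PowerSeries.coeff (R := (MvPolynomial (Fin n × Fin (m + 1)) ℂ)) m
      (∑ i : ↥J, ∑ j : Fin (r i.1),
        PowerSeries.map (algebraMap ℂ (MvPolynomial (Fin n × Fin (m + 1)) ℂ)) (a i j) *
          MvPolynomial.aeval (jet n m) (f i.1 j)) with hGdef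
  -- basic facts about D
  have hDmem : D ∈ J := J.max'_mem hJ
  have hD1 : 1 ≤ D := hJ1 D hDmem
  have hDle : ∀ i ∈ J, i ≤ D := fun i hi => J.le_max' i hi
  -- the maximal index with nonzero initial coefficient
  have hane : ∃ i : ↥J, ∃ j : Fin (r i.1), PowerSeries.coeff (R := ℂ) 0 (a i j) ≠ 0 := by
    obtain ⟨i, hi⟩ := Function.ne_iff.mp ha
    obtain ⟨j, hj⟩ := Function.ne_iff.mp hi
    exact ⟨i, j, hj⟩
  set S : Finset ℕ :=
    J.filter (fun i => ∃ h : i ∈ J, ∃ j : Fin (r i), PowerSeries.coeff (R := ℂ) 0 (a ⟨i, h⟩ j) ≠ 0)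
    with hS
  have hSne : S.Nonempty := by
    obtain ⟨i, j, hij⟩ := hane
    exact ⟨i.1, Finset.mem_filter.mpr ⟨i.2, i.2, j, by
      convert hij⟩⟩
  set istar : ℕ := S.max' hSne with histar
  have histarS : istar ∈ S := S.max'_mem hSne
  have histarJ : istar ∈ J := (Finset.mem_filter.mp histarS).1
  obtain ⟨hmem2, jstar, hjstar⟩ := (Finset.mem_filter.mp histarS).2
  have hile : ∀ (i : ↥J) (j : Fin (r i.1)), PowerSeries.coeff (R := ℂ) 0 (a i j) ≠ 0 → i.1 ≤ istar := by
    intro i j hij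
    apply S.le_max' i.1
    exact Finset.mem_filter.mpr ⟨i.2, i.2, j, by convert hij⟩
  have histar1 : 1 ≤ istar := hJ1 istar histarJ
  have histarD : istar ≤ D := hDle istar histarJ
  -- deg_w g ≤ istar
  have hgle : weightedTotalDegree w g ≤ istar := by
    rw [weightedTotalDegree_le_iff]
    intro α hα
    obtain ⟨i, -, hα1⟩ := Finset.mem_biUnion.mp (MvPolynomial.support_sum hα)
    obtain ⟨j, -, hα2⟩ := Finset.mem_biUnion.mp (MvPolynomial.support_sum hα1)
    by_cases hc : PowerSeries.coeff (R := ℂ) 0 (a i j) = 0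
    · rw [hc, map_zero, zero_mul] at hα2
      simp at hα2
    · have hsub : (MvPolynomial.C (PowerSeries.coeff (R := ℂ) 0 (a i j)) * f i.1 j).support ⊆
          (f i.1 j).support := by
        rw [← MvPolynomial.smul_eq_C_mul]
        exact MvPolynomial.support_smul
      have h1 : Finsupp.weight w α ≤ weightedTotalDegree w (f i.1 j) :=
        le_weightedTotalDegree w (hsub hα2)
      rw [hfd i.1 i.2 j] at h1
      exact le_trans h1 (hile i j hc)
  -- top component of g at istar
  have hcomp : weightedHomogeneousComponent w istar g =
      ∑ j : Fin (r istar), MvPolynomial.C (PowerSeries.coeff (R := ℂ) 0 (a ⟨istar, histarJ⟩ j)) *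
        weightedHomogeneousComponent w istar (f istar j) := by
    rw [hg, map_sum, Finset.sum_eq_single_of_mem (⟨istar, histarJ⟩ : ↥J) (Finset.mem_univ _)]
    · rw [map_sum]
      exact Finset.sum_congr rfl fun j _ => weightedHomogeneousComponent_C_mul _ _ _
    · intro b _ hb
      have hbne : b.1 ≠ istar := fun h => hb (Subtype.ext h)
      rw [map_sum]
      apply Finset.sum_eq_zero
      intro j _
      rcases lt_or_gt_of_ne hbne with hlt | hgt
      · have hdeglt : weightedTotalDegree w (f b.1 j) < istar := by
          rw [hfd b.1 b.2 j]; exact hlt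
        rw [weightedHomogeneousComponent_C_mul,
          weightedHomogeneousComponent_eq_zero istar (f b.1 j) hdeglt, mul_zero]
      · have hc : PowerSeries.coeff (R := ℂ) 0 (a b j) = 0 := by
          by_contra hc
          exact absurd (hile b j hc) (not_le.mpr hgt)
        rw [hc, map_zero, zero_mul, map_zero]
  have hg0 : weightedHomogeneousComponent w istar g ≠ 0 := by
    intro h0
    rw [hcomp] at h0
    have hinj : Function.Injective
        (fun j : Fin (r istar) => (⟨⟨istar, histarJ⟩, j⟩ : Σ i : ↥J, Fin (r i.1))) :=
      fun j1 j2 h => by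
        have := Sigma.mk.inj_iff.mp h
        exact eq_of_heq this.2
    have hsub := hlin.comp _ hinj
    rw [Fintype.linearIndependent_iff] at hsub
    have hzero := hsub (fun j => PowerSeries.coeff (R := ℂ) 0 (a ⟨istar, histarJ⟩ j)) (by
      simp only [Function.comp]
      rw [← h0]
      exact Finset.sum_congr rfl fun j _ => (MvPolynomial.smul_eq_C_mul _ _)) jstar
    exact hjstar hzero
  have hdegg : weightedTotalDegree w g = istar :=
    le_antisymm hgle (whc_ne_zero_le w g istar hg0)
  rw [hdegg]
  -- expansion of G
  have hGsum : G = ∑ i : ↥J, ∑ j : Fin (r i.1), ∑ x ∈ Finset.HasAntidiagonal.antidiagonal m,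
      MvPolynomial.C (PowerSeries.coeff (R := ℂ) x.1 (a i j)) *
        PowerSeries.coeff (R := (MvPolynomial (Fin n × Fin (m + 1)) ℂ)) x.2
          (MvPolynomial.aeval (jet n m) (f i.1 j)) := by
    rw [hGdef]
    simp only [map_sum, PowerSeries.coeff_mul, PowerSeries.coeff_map, MvPolynomial.algebraMap_eq]
  -- the top component of G
  have hwhcG : weightedHomogeneousComponent (wt n m w D) (istar + D * m) G =
      PowerSeries.coeff (R := (MvPolynomial (Fin n × Fin (m + 1)) ℂ)) m
        (MvPolynomial.aeval (jet n m) (weightedHomogeneousComponent w istar g)) := by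
    have hcommon : ∀ (i : ↥J) (j : Fin (r i.1)),
        ∑ x ∈ Finset.HasAntidiagonal.antidiagonal m,
          weightedHomogeneousComponent (wt n m w D) (istar + D * m)
            (MvPolynomial.C (PowerSeries.coeff (R := ℂ) x.1 (a i j)) *
              PowerSeries.coeff (R := (MvPolynomial (Fin n × Fin (m + 1)) ℂ)) x.2
                (MvPolynomial.aeval (jet n m) (f i.1 j))) =
        MvPolynomial.C (PowerSeries.coeff (R := ℂ) 0 (a i j)) *
          PowerSeries.coeff (R := (MvPolynomial (Fin n × Fin (m + 1)) ℂ)) m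
            (MvPolynomial.aeval (jet n m)
              (weightedHomogeneousComponent w istar (f i.1 j))) := by
      intro i j
      rw [Finset.sum_eq_single_of_mem ((0, m) : ℕ × ℕ)
        (Finset.HasAntidiagonal.mem_antidiagonal.mpr (zero_add m))]
      · rw [weightedHomogeneousComponent_C_mul, whc_coeff_aeval_top]
      · intro x hx hxne
        have hxsum : x.1 + x.2 = m := Finset.HasAntidiagonal.mem_antidiagonal.mp hx
        have hx2 : x.2 < m := by
          rcases Nat.lt_or_ge x.2 m with h | h
          · exact h
          · exfalso
            apply hxne
            have : x.2 = m := le_antisymm (by omega) h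
            have : x.1 = 0 := by omega
            exact Prod.ext this ‹x.2 = m›
        rw [weightedHomogeneousComponent_C_mul,
          whc_coeff_aeval_lt (f i.1 j) i.1 x.2 (istar + D * m)
            (le_of_eq (hfd i.1 i.2 j)) ?_, mul_zero]
        have h2 : D * (x.2 + 1) ≤ D * m := Nat.mul_le_mul_left D hx2
        have h3 : D * (x.2 + 1) = D * x.2 + D := by ring
        have h4 : i.1 ≤ D := hDle i.1 i.2
        omega
    rw [hGsum, map_sum]
    have hLHS : ∀ i : ↥J,
        weightedHomogeneousComponent (wt n m w D) (istar + D * m)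
          (∑ j : Fin (r i.1), ∑ x ∈ Finset.HasAntidiagonal.antidiagonal m,
            MvPolynomial.C (PowerSeries.coeff (R := ℂ) x.1 (a i j)) *
              PowerSeries.coeff (R := (MvPolynomial (Fin n × Fin (m + 1)) ℂ)) x.2
                (MvPolynomial.aeval (jet n m) (f i.1 j))) =
        ∑ j : Fin (r i.1),
          MvPolynomial.C (PowerSeries.coeff (R := ℂ) 0 (a i j)) *
            PowerSeries.coeff (R := (MvPolynomial (Fin n × Fin (m + 1)) ℂ)) m
              (MvPolynomial.aeval (jet n m)
                (weightedHomogeneousComponent w istar (f i.1 j))) := by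
      intro i
      rw [map_sum]
      refine Finset.sum_congr rfl fun j _ => ?_
      rw [map_sum]
      exact hcommon i j
    rw [Finset.sum_congr rfl fun i _ => hLHS i]
    -- now compute the RHS
    rw [hg, map_sum, map_sum, map_sum]
    refine (Finset.sum_congr rfl fun i _ => ?_).symm
    rw [map_sum, map_sum, map_sum]
    refine Finset.sum_congr rfl fun j _ => ?_
    rw [weightedHomogeneousComponent_C_mul, map_mul, aeval_C,
      PowerSeries.algebraMap_apply, MvPolynomial.algebraMap_eq, PowerSeries.coeff_C_mul]
  have hne : PowerSeries.coeff (R := (MvPolynomial (Fin n × Fin (m + 1)) ℂ)) m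
      (MvPolynomial.aeval (jet n m) (weightedHomogeneousComponent w istar g)) ≠ 0 :=
    aeval_jet_coeff_ne_zero histar1 (weightedHomogeneousComponent_isWeightedHomogeneous istar g) hg0
  have horient : m * D + istar = istar + D * m := by ring
  rw [horient]
  constructor
  · -- degree statement
    apply le_antisymm
    · rw [weightedTotalDegree_le_iff]
      intro α hα
      rw [hGsum] at hα
      obtain ⟨i, -, hα1⟩ := Finset.mem_biUnion.mp (MvPolynomial.support_sum hα)
      obtain ⟨j, -, hα2⟩ := Finset.mem_biUnion.mp (MvPolynomial.support_sum hα1)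
      obtain ⟨x, hx, hα3⟩ := Finset.mem_biUnion.mp (MvPolynomial.support_sum hα2)
      have hxsum : x.1 + x.2 = m := Finset.HasAntidiagonal.mem_antidiagonal.mp hx
      by_cases hc : PowerSeries.coeff (R := ℂ) x.1 (a i j) = 0
      · rw [hc, map_zero, zero_mul] at hα3
        simp at hα3
      · have hsub : (MvPolynomial.C (PowerSeries.coeff (R := ℂ) x.1 (a i j)) *
            PowerSeries.coeff (R := (MvPolynomial (Fin n × Fin (m + 1)) ℂ)) x.2
              (MvPolynomial.aeval (jet n m) (f i.1 j))).support ⊆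
            (PowerSeries.coeff (R := (MvPolynomial (Fin n × Fin (m + 1)) ℂ)) x.2
              (MvPolynomial.aeval (jet n m) (f i.1 j))).support := by
          rw [← MvPolynomial.smul_eq_C_mul]
          exact MvPolynomial.support_smul
        obtain ⟨d, hd, hweight⟩ := support_coeff_aeval (D := D) (f i.1 j) x.2 (hsub hα3)
        rw [hfd i.1 i.2 j] at hd
        have h4 : i.1 ≤ D := hDle i.1 i.2
        rcases Nat.lt_or_ge x.2 m with h | h
        · have h2 : D * (x.2 + 1) ≤ D * m := Nat.mul_le_mul_left D h
          have h3 : D * (x.2 + 1) = D * x.2 + D := by ring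
          omega
        · have hx2 : x.2 = m := by omega
          have hx1 : x.1 = 0 := by omega
          rw [hx1] at hc
          have hi : i.1 ≤ istar := hile i j hc
          rw [hx2] at hweight
          omega
    · apply whc_ne_zero_le
      rw [hwhcG]
      exact hne
  · exact hwhcG
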